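/- Let n ≥ 1 and let t ∈ ℤ/nℤ be such that either t = 1, or both t and t − 1 are units of ℤ/nℤ. Then the number of solutions over ℤ/nℤ of the Alexander quandle coloring system of the connected sum of two Hopf links equals the number of solutions over ℤ/nℤ of the Alexander quandle coloring system of the Allen–Swenberg link (being n³ in the first case and n in the second). Hence the Alexander quandle, including the involutory case t = ±1 with t − 1 a unit or t = 1, cannot distinguish the connected sum of two Hopf links from the Allen–Swenberg link. -/

import Mathlib

/-!
At `t = 1` every crossing equation just says that the two under-arcs have the same color, so
the colorings are the functions that are constant on link components; both links have three
components, whence `n³` colorings each.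

When `t` and `1 - t` are units, only the constant colorings survive, for both links. For the
Allen–Swenberg diagram this rests on its decomposition into two twist regions of three full
twists, two copies of one 12-crossing tangle, and six outer arcs. A full twist moves both strand
colors `a, b` by `(1 - t) (b - a)`, and the tangle transforms its boundary colors exactly as
three full twists do. Since this transformation is injective, each twist region starts with the
colors at the end of a tangle, and then the remaining crossings force every outer color to be
the color of `x 0`. Finally a twist region or a tangle whose ends have a single color carries
only that color.
-/

/-- The Alexander quandle coloring system of the connected sum of two Hopf links over
a commutative ring `R` with parameter `t`, as a predicate on `x : Fin 4 → R`. -/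
def HopfSumSystem {R : Type*} [CommRing R] (t : R) (x : Fin 4 → R) : Prop :=
  x 1 = t * x 2 + (1 - t) * x 0 ∧
    x 2 = t * x 1 + (1 - t) * x 3 ∧
    x 0 = t * x 0 + (1 - t) * x 2 ∧
    x 3 = t * x 3 + (1 - t) * x 2

/-- The Alexander quandle coloring system of the Allen–Swenberg link over a
commutative ring `R` with parameter `t`, as a predicate on `x : Fin 45 → R`
(`x i` is the color of arc `xᵢ₊₁`). -/
def AllenSwenbergSystem {R : Type*} [CommRing R] (t : R) (x : Fin 45 → R) : Prop :=
  x 1 = t * x 0 + (1 - t) * x 25 ∧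
    x 25 = t * x 26 + (1 - t) * x 0 ∧
    x 0 = t * x 1 + (1 - t) * x 2 ∧
    x 2 = t * x 3 + (1 - t) * x 0 ∧
    x 3 = t * x 4 + (1 - t) * x 2 ∧
    x 4 = t * x 5 + (1 - t) * x 6 ∧
    x 7 = t * x 6 + (1 - t) * x 5 ∧
    x 28 = t * x 27 + (1 - t) * x 5 ∧
    x 2 = t * x 5 + (1 - t) * x 27 ∧
    x 8 = t * x 7 + (1 - t) * x 6 ∧
    x 6 = t * x 9 + (1 - t) * x 8 ∧
    x 10 = t * x 8 + (1 - t) * x 9 ∧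
    x 9 = t * x 11 + (1 - t) * x 10 ∧
    x 12 = t * x 10 + (1 - t) * x 11 ∧
    x 11 = t * x 13 + (1 - t) * x 12 ∧
    x 18 = t * x 14 + (1 - t) * x 13 ∧
    x 21 = t * x 14 + (1 - t) * x 12 ∧
    x 19 = t * x 15 + (1 - t) * x 13 ∧
    x 20 = t * x 15 + (1 - t) * x 12 ∧
    x 13 = t * x 16 + (1 - t) * x 20 ∧
    x 12 = t * x 17 + (1 - t) * x 20 ∧
    x 19 = t * x 16 + (1 - t) * x 21 ∧
    x 18 = t * x 17 + (1 - t) * x 21 ∧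
    x 20 = t * x 22 + (1 - t) * x 19 ∧
    x 21 = t * x 23 + (1 - t) * x 19 ∧
    x 25 = t * x 22 + (1 - t) * x 18 ∧
    x 24 = t * x 23 + (1 - t) * x 18 ∧
    x 29 = t * x 27 + (1 - t) * x 28 ∧
    x 28 = t * x 30 + (1 - t) * x 29 ∧
    x 31 = t * x 29 + (1 - t) * x 30 ∧
    x 30 = t * x 32 + (1 - t) * x 31 ∧
    x 33 = t * x 31 + (1 - t) * x 32 ∧
    x 32 = t * x 34 + (1 - t) * x 33 ∧
    x 39 = t * x 35 + (1 - t) * x 34 ∧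
    x 37 = t * x 35 + (1 - t) * x 33 ∧
    x 40 = t * x 36 + (1 - t) * x 34 ∧
    x 38 = t * x 36 + (1 - t) * x 33 ∧
    x 34 = t * x 41 + (1 - t) * x 38 ∧
    x 33 = t * x 42 + (1 - t) * x 38 ∧
    x 40 = t * x 41 + (1 - t) * x 37 ∧
    x 39 = t * x 42 + (1 - t) * x 37 ∧
    x 24 = t * x 43 + (1 - t) * x 39 ∧
    x 38 = t * x 43 + (1 - t) * x 40 ∧
    x 26 = t * x 44 + (1 - t) * x 39 ∧
    x 37 = t * x 44 + (1 - t) * x 40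

/- In a crossing `a = t * b + (1 - t) * c` the arc `b` passes under `c` and continues as `a`;
any two of the three colors equal to `v` force the third to be `v`. -/
namespace Crossing

variable {R : Type*} [CommRing R] {t a b b' c v : R}

theorem out_eq (h : a = t * b + (1 - t) * c) (hb : b = v) (hc : c = v) : a = v := by
  rw [h, hb, hc]
  ring

theorem in_eq (ht : IsUnit t) (h : a = t * b + (1 - t) * c) (ha : a = v) (hc : c = v) :
    b = v :=
  ht.mul_left_cancel (by linear_combination -h + ha - (1 - t) * hc)

theorem over_eq (hs : IsUnit (1 - t)) (h : a = t * b + (1 - t) * c) (ha : a = v) (hb : b = v) :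
    c = v :=
  hs.mul_left_cancel (by linear_combination -h + ha - t * hb)

theorem in_unique (ht : IsUnit t) (h : a = t * b + (1 - t) * c)
    (h' : a = t * b' + (1 - t) * c) : b = b' :=
  ht.mul_left_cancel (by linear_combination h' - h)

end Crossing

theorem ncard_setOf_forall_eq_comp {α β R : Type*} [Finite β] {c : α → β} {r : β → α}
    (hcr : Function.LeftInverse c r) :
    {x : α → R | ∀ i, x i = x (r (c i))}.ncard = Nat.card R ^ Nat.card β := by
  have hrange : {x : α → R | ∀ i, x i = x (r (c i))} = Set.range fun y : β → R => y ∘ c := by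
    ext x
    refine ⟨fun hx => ⟨x ∘ r, funext fun i => (hx i).symm⟩, ?_⟩
    rintro ⟨y, rfl⟩ i
    simp only [Function.comp_apply, hcr (c i)]
  rw [hrange, Set.ncard_range_of_injective hcr.surjective.injective_comp_right, Nat.card_fun]

theorem ncard_setOf_forall_eq_apply {α R : Type*} (a : α) :
    {x : α → R | ∀ i, x i = x a}.ncard = Nat.card R := by
  simpa using ncard_setOf_forall_eq_comp (R := R) (c := fun _ : α => ()) (r := fun _ => a)
    fun _ => rfl

theorem eq_and_eq_of_add_mul_sub {R : Type*} [CommRing R] {m a b c d : R}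
    (h₁ : a + m * (b - a) = c + m * (d - c)) (h₂ : b + m * (b - a) = d + m * (d - c)) :
    a = c ∧ b = d := by
  have hδ : b - a = d - c := by linear_combination h₂ - h₁
  exact ⟨by linear_combination h₁ - m * hδ, by linear_combination h₂ - m * hδ⟩

section Twist

variable {R : Type*} [CommRing R] {t : R} {n : ℕ}

/-- `a k` and `b k` are the colors of the two strands after `k` full twists. -/
def IsTwistColoring (t : R) (a b : Fin (n + 1) → R) : Prop :=
  ∀ k : Fin n, a k.succ = t * a k.castSucc + (1 - t) * b k.castSucc ∧
    b k.castSucc = t * b k.succ + (1 - t) * a k.succ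

theorem IsTwistColoring.eq_add_mul_sub (ht : IsUnit t) {a b : Fin (n + 1) → R}
    (h : IsTwistColoring t a b) (k : Fin (n + 1)) :
    a k = a 0 + k * (1 - t) * (b 0 - a 0) ∧ b k = b 0 + k * (1 - t) * (b 0 - a 0) := by
  induction k using Fin.induction with
  | zero => simp
  | succ k ih =>
    obtain ⟨iha, ihb⟩ := ih
    rw [Fin.val_castSucc] at iha ihb
    obtain ⟨ha, hb⟩ := h k
    have ha' : a k.succ = a 0 + (k + 1) * (1 - t) * (b 0 - a 0) := by
      linear_combination ha + t * iha + (1 - t) * ihb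
    rw [Fin.val_succ, Nat.cast_succ]
    exact ⟨ha', ht.mul_left_cancel (by linear_combination -hb + ihb - (1 - t) * ha')⟩

theorem IsTwistColoring.eq_of_eq (ht : IsUnit t) {a b : Fin (n + 1) → R}
    (h : IsTwistColoring t a b) (hab : b 0 = a 0) (k : Fin (n + 1)) : a k = a 0 ∧ b k = a 0 := by
  simpa [hab] using h.eq_add_mul_sub ht k

end Twist

section Tangle

variable {R : Type*} [CommRing R] {t : R}

/-- The tangle spanned by the arcs `x₁₃, …, x₂₆` of the Allen–Swenberg diagram, with `y i` the
color of `xᵢ₊₁₃`: the strands enter along `y 0`, `y 1` and leave along `y 12`, `y 13`. -/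
def IsTangleColoring (t : R) (y : Fin 14 → R) : Prop :=
  y 6 = t * y 2 + (1 - t) * y 1 ∧
    y 9 = t * y 2 + (1 - t) * y 0 ∧
    y 7 = t * y 3 + (1 - t) * y 1 ∧
    y 8 = t * y 3 + (1 - t) * y 0 ∧
    y 1 = t * y 4 + (1 - t) * y 8 ∧
    y 0 = t * y 5 + (1 - t) * y 8 ∧
    y 7 = t * y 4 + (1 - t) * y 9 ∧
    y 6 = t * y 5 + (1 - t) * y 9 ∧
    y 8 = t * y 10 + (1 - t) * y 7 ∧
    y 9 = t * y 11 + (1 - t) * y 7 ∧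
    y 13 = t * y 10 + (1 - t) * y 6 ∧
    y 12 = t * y 11 + (1 - t) * y 6

/-- Read from its end, the tangle acts on colors like three full twists
(`IsTwistColoring.eq_add_mul_sub` with `k = 3`). -/
theorem IsTangleColoring.eq_add_mul_sub {y : Fin 14 → R} (h : IsTangleColoring t y) :
    y 0 = y 12 + 3 * (1 - t) * (y 13 - y 12) ∧ y 1 = y 13 + 3 * (1 - t) * (y 13 - y 12) := by
  obtain ⟨h1, h2, h3, h4, h5, h6, h7, h8, h9, h10, h11, h12⟩ := h
  constructor
  · linear_combination (-1 + 2 * t) * h1 + (1 - 2 * t) * h2 + (2 - 2 * t) * h3 +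
      (-2 + 2 * t) * h4 + (1 - t) * h5 + t * h6 + (-1 + t) * h7 - t * h8 + (3 - 3 * t) * h9 +
      (-2 + 3 * t) * h10 + (-3 + 3 * t) * h11 + (2 - 3 * t) * h12
  · linear_combination (-2 + 2 * t) * h1 + (2 - 2 * t) * h2 + (3 - 2 * t) * h3 +
      (-3 + 2 * t) * h4 + (2 - t) * h5 + (-1 + t) * h6 + (-2 + t) * h7 + (1 - t) * h8 +
      (4 - 3 * t) * h9 + (-3 + 3 * t) * h10 + (-4 + 3 * t) * h11 + (3 - 3 * t) * h12

theorem IsTangleColoring.eq_of_eq (ht : IsUnit t) {y : Fin 14 → R} (h : IsTangleColoring t y)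
    (hy : y 13 = y 12) (i : Fin 14) : y i = y 12 := by
  obtain ⟨e₀, e₁⟩ := h.eq_add_mul_sub
  rw [hy, sub_self, mul_zero, add_zero] at e₀ e₁
  obtain ⟨h1, h2, h3, h4, h5, h6, h7, h8, h9, h10, h11, h12⟩ := h
  have e₉₆ : y 9 = y 6 := by rw [h1, h2, e₀, e₁]
  have e₈₇ : y 8 = y 7 := by rw [h3, h4, e₀, e₁]
  have e₅₄ : y 5 = y 4 := Crossing.in_unique ht (e₀.symm.trans h6) (e₁.symm.trans h5)
  have e₇₆ : y 7 = y 6 := by rw [h7, h8, e₅₄]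
  have e₁₀ : y 10 = y 6 := Crossing.in_eq ht h9 (e₈₇.trans e₇₆) e₇₆
  have e₆ : y 6 = y 12 := (Crossing.out_eq h11 e₁₀ rfl).symm.trans hy
  have e₇ : y 7 = y 12 := e₇₆.trans e₆
  have e₈ : y 8 = y 12 := e₈₇.trans e₇
  have e₄ : y 4 = y 12 := Crossing.in_eq ht h5 e₁ e₈
  fin_cases i
  exacts [e₀, e₁, Crossing.in_eq ht h1 e₆ e₁, Crossing.in_eq ht h3 e₇ e₁, e₄, e₅₄.trans e₄, e₆,
    e₇, e₈, e₉₆.trans e₆, e₁₀.trans e₆, Crossing.in_eq ht h12 rfl e₆, rfl, hy]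

end Tangle

def hopfSumComponent : Fin 4 → Fin 3 := ![0, 1, 1, 2]

def allenSwenbergComponent (i : Fin 45) : Fin 3 := if i < 2 then 0 else if i < 6 then 1 else 2

namespace AllenSwenbergSystem

def twistArcs₁ : Fin 4 → Fin 45 := ![7, 8, 10, 12]
def twistArcs₁' : Fin 4 → Fin 45 := ![6, 9, 11, 13]
def twistArcs₂ : Fin 4 → Fin 45 := ![27, 29, 31, 33]
def twistArcs₂' : Fin 4 → Fin 45 := ![28, 30, 32, 34]
def tangleArcs₁ : Fin 14 → Fin 45 := ![12, 13, 14, 15, 16, 17, 18, 19, 20, 21, 22, 23, 24, 25]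
def tangleArcs₂ : Fin 14 → Fin 45 := ![33, 34, 35, 36, 41, 42, 39, 40, 38, 37, 43, 44, 26, 24]

variable {R : Type*} [CommRing R] {t : R} {x : Fin 45 → R}

theorem isTwistColoring₁ (h : AllenSwenbergSystem t x) :
    IsTwistColoring t (x ∘ twistArcs₁) (x ∘ twistArcs₁') := by
  obtain ⟨-, -, -, -, -, -, -, -, -, h10, h11, h12, h13, h14, h15, -⟩ := h
  intro k
  fin_cases k
  exacts [⟨h10, h11⟩, ⟨h12, h13⟩, ⟨h14, h15⟩]

theorem isTwistColoring₂ (h : AllenSwenbergSystem t x) :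
    IsTwistColoring t (x ∘ twistArcs₂) (x ∘ twistArcs₂') := by
  obtain ⟨-, -, -, -, -, -, -, -, -, -, -, -, -, -, -, -, -, -, -, -, -, -, -, -, -, -, -, h28, h29,
    h30, h31, h32, h33, -⟩ := h
  intro k
  fin_cases k
  exacts [⟨h28, h29⟩, ⟨h30, h31⟩, ⟨h32, h33⟩]

theorem isTangleColoring₁ (h : AllenSwenbergSystem t x) :
    IsTangleColoring t (x ∘ tangleArcs₁) := by
  obtain ⟨-, -, -, -, -, -, -, -, -, -, -, -, -, -, -, h16, h17, h18, h19, h20, h21, h22, h23, h24,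
    h25, h26, h27, -⟩ := h
  exact ⟨h16, h17, h18, h19, h20, h21, h22, h23, h24, h25, h26, h27⟩

theorem isTangleColoring₂ (h : AllenSwenbergSystem t x) :
    IsTangleColoring t (x ∘ tangleArcs₂) := by
  obtain ⟨-, -, -, -, -, -, -, -, -, -, -, -, -, -, -, -, -, -, -, -, -, -, -, -, -, -, -, -, -, -,
    -, -, -, h34, h35, h36, h37, h38, h39, h40, h41, h42, h43, h44, h45⟩ := h
  exact ⟨h34, h35, h36, h37, h38, h39, h40, h41, h43, h45, h42, h44⟩

theorem twist_start_eq_tangle_end (ht : IsUnit t) (h : AllenSwenbergSystem t x) :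
    x 7 = x 24 ∧ x 6 = x 25 ∧ x 27 = x 26 ∧ x 28 = x 24 := by
  obtain ⟨a₁, b₁⟩ := (isTwistColoring₁ h).eq_add_mul_sub ht 3
  obtain ⟨a₂, b₂⟩ := (isTwistColoring₂ h).eq_add_mul_sub ht 3
  obtain ⟨c₁, d₁⟩ := (isTangleColoring₁ h).eq_add_mul_sub
  obtain ⟨c₂, d₂⟩ := (isTangleColoring₂ h).eq_add_mul_sub
  simp only [Fin.coe_ofNat_eq_mod, Nat.mod_succ, Nat.cast_ofNat] at a₁ b₁ a₂ b₂
  obtain ⟨e₇, e₆⟩ := eq_and_eq_of_add_mul_sub (a₁.symm.trans c₁) (b₁.symm.trans d₁)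
  obtain ⟨e₂₇, e₂₈⟩ := eq_and_eq_of_add_mul_sub (a₂.symm.trans c₂) (b₂.symm.trans d₂)
  exact ⟨e₇, e₆, e₂₇, e₂₈⟩

theorem outer_arcs_eq (ht : IsUnit t) (hs : IsUnit (1 - t)) (h : AllenSwenbergSystem t x) :
    x 1 = x 0 ∧ x 2 = x 0 ∧ x 3 = x 0 ∧ x 4 = x 0 ∧ x 5 = x 0 ∧ x 6 = x 0 ∧ x 7 = x 0 ∧
      x 24 = x 0 ∧ x 25 = x 0 ∧ x 26 = x 0 ∧ x 27 = x 0 ∧ x 28 = x 0 := by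
  obtain ⟨e₇, e₆, e₂₇, e₂₈⟩ := twist_start_eq_tangle_end ht h
  obtain ⟨h1, h2, h3, h4, -, h6, h7, h8, h9, -⟩ := h
  have x₂₇₆ : x 27 = x 6 := Crossing.in_unique ht ((e₇.trans e₂₈.symm).trans h8) h7
  have x₆ : x 6 = x 0 := (Crossing.over_eq hs h2 e₆.symm (e₂₇.symm.trans x₂₇₆)).symm
  have x₂₅ : x 25 = x 0 := e₆.symm.trans x₆
  have x₂₇ : x 27 = x 0 := x₂₇₆.trans x₆
  have x₁ : x 1 = x 0 := Crossing.out_eq h1 rfl x₂₅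
  have x₂ : x 2 = x 0 := Crossing.over_eq hs h3 rfl x₁
  have x₅ : x 5 = x 0 := Crossing.in_eq ht h9 x₂ x₂₇
  have x₇ : x 7 = x 0 := Crossing.out_eq h7 x₆ x₅
  exact ⟨x₁, x₂, Crossing.in_eq ht h4 x₂ rfl, Crossing.out_eq h6 x₅ x₆, x₅, x₆, x₇,
    e₇.symm.trans x₇, x₂₅, e₂₇.symm.trans x₂₇, x₂₇, e₂₈.trans (e₇.symm.trans x₇)⟩

theorem eq_of_isUnit (ht : IsUnit t) (hs : IsUnit (1 - t)) (h : AllenSwenbergSystem t x)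
    (i : Fin 45) : x i = x 0 := by
  obtain ⟨x₁, x₂, x₃, x₄, x₅, x₆, x₇, x₂₄, x₂₅, x₂₆, x₂₇, x₂₈⟩ := outer_arcs_eq ht hs h
  have hB := (isTwistColoring₁ h).eq_of_eq ht (x₆.trans x₇.symm)
  have hC := (isTwistColoring₂ h).eq_of_eq ht (x₂₈.trans x₂₇.symm)
  have hT₁ := (isTangleColoring₁ h).eq_of_eq ht (x₂₅.trans x₂₄.symm)
  have hT₂ := (isTangleColoring₂ h).eq_of_eq ht (x₂₄.trans x₂₆.symm)
  have cover : i ∈ ({0, 1, 2, 3, 4, 5} : Finset (Fin 45)) ∨ (∃ k, twistArcs₁ k = i) ∨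
      (∃ k, twistArcs₁' k = i) ∨ (∃ k, twistArcs₂ k = i) ∨ (∃ k, twistArcs₂' k = i) ∨
      (∃ k, tangleArcs₁ k = i) ∨ ∃ k, tangleArcs₂ k = i := by
    revert i
    decide
  rcases cover with hi | ⟨k, rfl⟩ | ⟨k, rfl⟩ | ⟨k, rfl⟩ | ⟨k, rfl⟩ | ⟨k, rfl⟩ | ⟨k, rfl⟩
  · simp only [Finset.mem_insert, Finset.mem_singleton] at hi
    rcases hi with rfl | rfl | rfl | rfl | rfl | rfl
    exacts [rfl, x₁, x₂, x₃, x₄, x₅]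
  · exact (hB k).1.trans x₇
  · exact (hB k).2.trans x₇
  · exact (hC k).1.trans x₂₇
  · exact (hC k).2.trans x₂₇
  · exact (hT₁ k).trans x₂₄
  · exact (hT₂ k).trans x₂₆

end AllenSwenbergSystem

section Systems

variable {R : Type*} [CommRing R] {t : R}

theorem hopfSumSystem_one_iff {x : Fin 4 → R} :
    HopfSumSystem 1 x ↔ ∀ i, x i = x (![0, 1, 3] (hopfSumComponent i)) := by
  refine ⟨fun h i => ?_, fun h => ?_⟩
  · simp only [HopfSumSystem, one_mul, sub_self, zero_mul, add_zero] at h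
    fin_cases i <;>
      simp only [Fin.reduceFinMk, Fin.zero_eta, Fin.mk_one, Fin.isValue, hopfSumComponent,
        Matrix.cons_val, Matrix.cons_val_one, Matrix.cons_val_zero]
    exact h.2.1
  · rw [funext h]
    simp [HopfSumSystem, hopfSumComponent]

theorem allenSwenbergSystem_one_iff {x : Fin 45 → R} :
    AllenSwenbergSystem 1 x ↔ ∀ i, x i = x (![0, 2, 6] (allenSwenbergComponent i)) := by
  refine ⟨fun h i => ?_, fun h => ?_⟩
  · simp only [AllenSwenbergSystem, one_mul, sub_self, zero_mul, add_zero] at h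
    fin_cases i <;>
      simp only [Fin.reduceFinMk, Fin.zero_eta, Fin.mk_one, Fin.isValue, allenSwenbergComponent,
        Fin.reduceLT, lt_self_iff_false, ↓reduceIte, Matrix.cons_val, Matrix.cons_val_one,
        Matrix.cons_val_zero] <;>
      grind
  · rw [funext h]
    simp [AllenSwenbergSystem, allenSwenbergComponent]

theorem hopfSumSystem_const (t v : R) : HopfSumSystem t fun _ => v := by
  have hv : v = t * v + (1 - t) * v := by ring
  exact ⟨hv, hv, hv, hv⟩

theorem allenSwenbergSystem_const (t v : R) : AllenSwenbergSystem t fun _ => v := by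
  have hv : v = t * v + (1 - t) * v := by ring
  simp only [AllenSwenbergSystem, ← hv, and_self]

theorem HopfSumSystem.eq_of_isUnit (hs : IsUnit (1 - t)) {x : Fin 4 → R}
    (h : HopfSumSystem t x) (i : Fin 4) : x i = x 0 := by
  obtain ⟨h1, -, h3, h4⟩ := h
  have x₂ : x 2 = x 0 := Crossing.over_eq hs h3 rfl rfl
  have x₃ : x 3 = x 0 := (Crossing.over_eq hs h4 rfl rfl).symm.trans x₂
  fin_cases i
  exacts [rfl, Crossing.out_eq h1 x₂ rfl, x₂, x₃]

theorem hopfSumSystem_iff_of_isUnit (hs : IsUnit (1 - t)) {x : Fin 4 → R} :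
    HopfSumSystem t x ↔ ∀ i, x i = x 0 := by
  refine ⟨HopfSumSystem.eq_of_isUnit hs, fun h => ?_⟩
  rw [funext h]
  exact hopfSumSystem_const t (x 0)

theorem allenSwenbergSystem_iff_of_isUnit (ht : IsUnit t) (hs : IsUnit (1 - t))
    {x : Fin 45 → R} : AllenSwenbergSystem t x ↔ ∀ i, x i = x 0 := by
  refine ⟨AllenSwenbergSystem.eq_of_isUnit ht hs, fun h => ?_⟩
  rw [funext h]
  exact allenSwenbergSystem_const t (x 0)

end Systems

theorem hopf_sum_allen_swenberg_indistinguishable_general (n : ℕ) (t : ZMod n)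
    (ht : t = 1 ∨ (IsUnit t ∧ IsUnit (t - 1))) :
    {x : Fin 4 → ZMod n | HopfSumSystem t x}.ncard =
      {x : Fin 45 → ZMod n | AllenSwenbergSystem t x}.ncard ∧
    (t = 1 → {x : Fin 4 → ZMod n | HopfSumSystem t x}.ncard = n ^ 3) ∧
    (IsUnit t ∧ IsUnit (t - 1) →
      {x : Fin 4 → ZMod n | HopfSumSystem t x}.ncard = n) := by
  have n_eq_one (h : IsUnit (1 - 1 : ZMod n)) : n = 1 := by
    rw [sub_self, isUnit_zero_iff, subsingleton_iff_zero_eq_one] at h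
    exact ZMod.subsingleton_iff.mp h
  rcases ht with rfl | ⟨ht, ht₁⟩
  · have hH : {x : Fin 4 → ZMod n | HopfSumSystem 1 x}.ncard = n ^ 3 := by
      simp only [hopfSumSystem_one_iff]
      rw [ncard_setOf_forall_eq_comp (by decide), Nat.card_zmod, Nat.card_fin]
    have hA : {x : Fin 45 → ZMod n | AllenSwenbergSystem 1 x}.ncard = n ^ 3 := by
      simp only [allenSwenbergSystem_one_iff]
      rw [ncard_setOf_forall_eq_comp (by decide), Nat.card_zmod, Nat.card_fin]
    refine ⟨hH.trans hA.symm, fun _ => hH, fun ⟨_, h⟩ => ?_⟩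
    rw [hH, n_eq_one h, one_pow]
  · have hs : IsUnit (1 - t) := by simpa using ht₁.neg
    have hH : {x : Fin 4 → ZMod n | HopfSumSystem t x}.ncard = n := by
      simp only [hopfSumSystem_iff_of_isUnit hs]
      rw [ncard_setOf_forall_eq_apply, Nat.card_zmod]
    have hA : {x : Fin 45 → ZMod n | AllenSwenbergSystem t x}.ncard = n := by
      simp only [allenSwenbergSystem_iff_of_isUnit ht hs]
      rw [ncard_setOf_forall_eq_apply, Nat.card_zmod]
    refine ⟨hH.trans hA.symm, fun h => ?_, fun _ => hH⟩
    subst h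
    rw [hH, n_eq_one ht₁, one_pow]

/-- Over `ℤ/nℤ` with `n ≥ 1`, if either `t = 1` or both `t` and `t − 1` are units,
then the Alexander quandle counting invariants of the connected sum of two Hopf links
and of the Allen–Swenberg link coincide (being `n³` in the first case and `n` in the
second); hence the Alexander quandle, including the involutory cases, cannot
distinguish the two links. -/
theorem hopf_sum_allen_swenberg_indistinguishable (n : ℕ) (hn : 1 ≤ n) (t : ZMod n)
    (ht : t = 1 ∨ (IsUnit t ∧ IsUnit (t - 1))) :
    {x : Fin 4 → ZMod n | HopfSumSystem t x}.ncard =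
      {x : Fin 45 → ZMod n | AllenSwenbergSystem t x}.ncard ∧
    (t = 1 → {x : Fin 4 → ZMod n | HopfSumSystem t x}.ncard = n ^ 3) ∧
    (IsUnit t ∧ IsUnit (t - 1) →
      {x : Fin 4 → ZMod n | HopfSumSystem t x}.ncard = n) :=
  hopf_sum_allen_swenberg_indistinguishable_general n t ht
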